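/- Fix an alphabet size d ≥ 1. For every δ ∈ (0,1) and every finite set 𝒲 of words over {1,…,d}, there exists b₀ ∈ ℕ such that for all block sizes b ≥ b₀ and all numbers of blocks k ≥ 1 with N = kb ≥ |𝒲|, the block-diagonal random model satisfies, with probability at least 1 − δ: the family of vectors {A_I h₀ : I ∈ 𝒲} ⊂ ℝ^N is linearly independent; equivalently, for every assignment of target values c : 𝒲 → ℝ there exists a linear readout vector v ∈ ℝ^N with ⟨v, A_I h₀⟩ = c(I) for every I ∈ 𝒲. -/

import Mathlib

open MeasureTheory ProbabilityTheory Matrix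

noncomputable section

/-- Ordered product of the matrices `A i` along the word `I`
(the identity matrix for the empty word). -/
def wordProd {d : ℕ} {n : Type*} [Fintype n] [DecidableEq n]
    (A : Fin d → Matrix n n ℝ) (I : List (Fin d)) : Matrix n n ℝ :=
  (I.map A).prod

/-- Sample space of the block-diagonal random model: the entries of the `k` blocks
`B^i_l ∈ ℝ^{b×b}` for each channel `i`, together with the initial vector `h₀ ∈ ℝ^N`
(`N = k⬝b`, an index `(β, l) : Fin b × Fin k` is coordinate `β` of block `l`). -/
abbrev BlockOmega (d k b : ℕ) : Type :=
  (Fin d → Fin k → Fin b → Fin b → ℝ) × ((Fin b × Fin k) → ℝ)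

/-- The probability measure of the block-diagonal random model: all block entries are
i.i.d. centred Gaussians of variance `1/b`, and the entries of `h₀` are i.i.d.
standard Gaussians, independent of the blocks. -/
def blockMeasure (d k b : ℕ) : Measure (BlockOmega d k b) :=
  (Measure.pi fun _ : Fin d => Measure.pi fun _ : Fin k => Measure.pi fun _ : Fin b =>
      Measure.pi fun _ : Fin b => gaussianReal 0 (1 / b)).prod
    (Measure.pi fun _ : Fin b × Fin k => gaussianReal 0 1)

/-- The channel matrices of the block-diagonal model:
`A^i = BlockDiag(B^i_1, …, B^i_k)`. -/
def blockA {d k b : ℕ} (ω : BlockOmega d k b) (i : Fin d) :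
    Matrix (Fin b × Fin k) (Fin b × Fin k) ℝ :=
  Matrix.blockDiagonal fun l => Matrix.of (ω.1 i l)

/-- The random feature `A_I h₀` associated to a word `I`. -/
def blockFeature {d k b : ℕ} (I : List (Fin d)) (ω : BlockOmega d k b) :
    Fin b × Fin k → ℝ :=
  (wordProd (blockA ω) I).mulVec ω.2

section Aux

lemma measurable_mvpoly_eval {σ : Type*} (p : MvPolynomial σ ℝ) :
    Measurable fun x : σ → ℝ => MvPolynomial.eval x p := by
  induction p using MvPolynomial.induction_on with
  | C a => simpa using measurable_const
  | add p q hp hq => simp only [map_add]; exact hp.add hq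
  | mul_X p i hp => simp only [map_mul, MvPolynomial.eval_X]; exact hp.mul (measurable_pi_apply i)

lemma mvpoly_null_fin : ∀ (n : ℕ) (μ : Fin n → Measure ℝ), (∀ i, IsProbabilityMeasure (μ i)) →
    (∀ i x, μ i {x} = 0) → ∀ (p : MvPolynomial (Fin n) ℝ), p ≠ 0 →
    Measure.pi μ {x | MvPolynomial.eval x p = 0} = 0 := by
  intro n
  induction n with
  | zero =>
    intro μ _ _ p hp
    obtain ⟨a, rfl⟩ := MvPolynomial.C_surjective (Fin 0) p
    have ha : a ≠ 0 := fun h => hp (by simp [h])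
    convert measure_empty
    · ext x; simp [ha]
    · infer_instance
  | succ n ih =>
    intro μ hprob hatom p hp
    haveI := hprob
    set q := MvPolynomial.finSuccEquiv ℝ n p with hqdef
    have hq0 : q ≠ 0 := fun h => hp ((MvPolynomial.finSuccEquiv ℝ n).injective (by simp [← hqdef, h]))
    set c := q.leadingCoeff with hcdef
    have hc : c ≠ 0 := Polynomial.leadingCoeff_ne_zero.mpr hq0
    set ν := Measure.pi fun j : Fin n => μ ((0 : Fin (n + 1)).succAbove j) with hν
    haveI : ∀ j : Fin n, IsProbabilityMeasure (μ ((0 : Fin (n + 1)).succAbove j)) := fun j => hprob _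
    haveI : NullSingletonClass (μ 0) := ⟨hatom 0⟩
    set S := {x : Fin (n + 1) → ℝ | MvPolynomial.eval x p = 0} with hSdef
    have hS : MeasurableSet S := measurable_mvpoly_eval p (measurableSet_singleton 0)
    set e := MeasurableEquiv.piFinSuccAbove (fun _ : Fin (n + 1) => ℝ) 0 with he
    have MP := (measurePreserving_piFinSuccAbove μ 0).symm
    have h1 : Measure.pi μ S = ((μ 0).prod ν) (e.symm ⁻¹' S) := (MP.measure_preimage hS.nullMeasurableSet).symm
    rw [h1]
    have hT : MeasurableSet (e.symm ⁻¹' S) := e.symm.measurable hS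
    rw [show ((μ 0).prod ν) (e.symm ⁻¹' S) = (ν.prod (μ 0)) (Prod.swap ⁻¹' (e.symm ⁻¹' S)) by
      rw [← Measure.prod_swap, Measure.map_apply measurable_swap hT]]
    rw [Measure.measure_prod_null ((measurable_swap (e.symm.measurable hS)))]
    have hbad : ν {y | MvPolynomial.eval y c = 0} = 0 :=
      ih _ (fun j => hprob _) (fun j x => hatom _ x) c hc
    have hae : ∀ᵐ y ∂ν, MvPolynomial.eval y c ≠ 0 := by
      rw [ae_iff]; simpa using hbad
    filter_upwards [hae] with y hy
    have hqy : q.map (MvPolynomial.eval y) ≠ 0 := by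
      intro h
      apply hy
      have h2 : (q.map (MvPolynomial.eval y)).coeff q.natDegree = 0 := by rw [h]; simp
      rw [Polynomial.coeff_map] at h2
      exact h2
    have hsub : (Prod.mk y ⁻¹' (Prod.swap ⁻¹' (e.symm ⁻¹' S))) ⊆ {t | (q.map (MvPolynomial.eval y)).IsRoot t} := by
      intro t ht
      simp only [Set.mem_preimage, Prod.swap] at ht
      have hts : e.symm (t, y) ∈ S := ht
      have : e.symm (t, y) = Fin.cons t y := by
        simp [he, MeasurableEquiv.piFinSuccAbove, Fin.insertNthEquiv,
          Fin.consEquiv]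
      rw [this] at hts
      have := hts
      rw [hSdef] at this
      simp only [Set.mem_setOf_eq] at this
      rw [MvPolynomial.eval_eq_eval_mv_eval'] at this
      exact this
    simp only [Pi.zero_apply]
    exact measure_mono_null hsub ((Polynomial.finite_setOf_isRoot hqy).measure_zero _)

lemma mvpoly_null {σ : Type*} [Fintype σ] (μ : σ → Measure ℝ) [hpr : ∀ i, IsProbabilityMeasure (μ i)]
    (hatom : ∀ i x, μ i {x} = 0) (p : MvPolynomial σ ℝ) (hp : p ≠ 0) :
    Measure.pi μ {x | MvPolynomial.eval x p = 0} = 0 := by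
  classical
  set e := (Fintype.equivFin σ).symm with he
  have MP := measurePreserving_piCongrLeft μ e
  have hS : MeasurableSet {x : σ → ℝ | MvPolynomial.eval x p = 0} :=
    measurable_mvpoly_eval p (measurableSet_singleton 0)
  rw [← MP.measure_preimage hS.nullMeasurableSet]
  have key : (⇑(MeasurableEquiv.piCongrLeft (fun _ : σ => ℝ) e)) ⁻¹' {x | MvPolynomial.eval x p = 0}
      = {y : Fin (Fintype.card σ) → ℝ | MvPolynomial.eval y (MvPolynomial.rename e.symm p) = 0} := by
    ext y
    simp only [Set.mem_preimage, Set.mem_setOf_eq, MvPolynomial.eval_rename]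
    have : (⇑(MeasurableEquiv.piCongrLeft (fun _ : σ => ℝ) e) y) = y ∘ e.symm := by
      funext i
      conv_lhs => rw [show i = e (e.symm i) by simp]
      rw [MeasurableEquiv.piCongrLeft]
      simp [Equiv.piCongrLeft_apply_eq_cast]
    rw [this]
  rw [key]
  exact mvpoly_null_fin _ _ (fun j => hpr _) (fun j x => hatom _ x) _
    (fun h => hp (MvPolynomial.rename_injective _ e.symm.injective (by simpa using h)))


def mcurry4 (α β γ η : Type*) : (α × β × γ × η → ℝ) ≃ᵐ (α → β → γ → η → ℝ) where
  toEquiv :=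
    { toFun := fun x a b c e => x (a, b, c, e)
      invFun := fun f p => f p.1 p.2.1 p.2.2.1 p.2.2.2
      left_inv := fun x => rfl
      right_inv := fun f => rfl }
  measurable_toFun := by
    refine measurable_pi_lambda _ fun a => measurable_pi_lambda _ fun b =>
      measurable_pi_lambda _ fun c => measurable_pi_lambda _ fun e => measurable_pi_apply _
  measurable_invFun := by
    refine measurable_pi_lambda _ fun p => ?_
    have h1 : Measurable fun f : α → β → γ → η → ℝ => f p.1 := measurable_pi_apply _
    have h2 : Measurable fun g : β → γ → η → ℝ => g p.2.1 := measurable_pi_apply _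
    have h3 : Measurable fun g : γ → η → ℝ => g p.2.2.1 := measurable_pi_apply _
    have h4 : Measurable fun g : η → ℝ => g p.2.2.2 := measurable_pi_apply _
    exact h4.comp (h3.comp (h2.comp h1))

lemma measurePreserving_mcurry4 {α β γ η : Type*} [Fintype α] [Fintype β] [Fintype γ] [Fintype η]
    (m : Measure ℝ) [IsProbabilityMeasure m] :
    MeasurePreserving (mcurry4 α β γ η) (Measure.pi fun _ : α × β × γ × η => m)
      (Measure.pi fun _ : α => Measure.pi fun _ : β => Measure.pi fun _ : γ =>
        Measure.pi fun _ : η => m) := by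
  have h : MeasurePreserving (mcurry4 α β γ η).symm
      (Measure.pi fun _ : α => Measure.pi fun _ : β => Measure.pi fun _ : γ =>
        Measure.pi fun _ : η => m)
      (Measure.pi fun _ : α × β × γ × η => m) := by
    refine ⟨(mcurry4 α β γ η).symm.measurable, (Measure.pi_eq fun s hs => ?_).symm⟩
    rw [Measure.map_apply (mcurry4 α β γ η).symm.measurable (MeasurableSet.univ_pi hs)]
    have hpre : (mcurry4 α β γ η).symm ⁻¹' (Set.univ.pi s) =
        Set.univ.pi (fun a => Set.univ.pi fun b => Set.univ.pi fun c =>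
          Set.univ.pi fun e => s (a, b, c, e)) := by
      ext f
      simp [mcurry4, Set.mem_pi, Prod.forall]
    rw [hpre]
    rw [Measure.pi_pi]
    simp_rw [Measure.pi_pi]
    simp only [Fintype.prod_prod_type]
  have := MeasurePreserving.symm _ h
  exact this

lemma gram_det_ne_zero_iff {κ n : Type*} [Fintype κ] [DecidableEq κ] [Fintype n]
    (f : κ → n → ℝ) :
    (Matrix.of fun I J : κ => f I ⬝ᵥ f J).det ≠ 0 ↔ LinearIndependent ℝ f := by
  classical
  set G : Matrix κ κ ℝ := Matrix.of fun I J : κ => f I ⬝ᵥ f J with hG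
  have hGv : ∀ x : κ → ℝ, (G *ᵥ x) = fun J => f J ⬝ᵥ (fun j => ∑ I, x I * f I j) := by
    intro x; funext J
    simp only [Matrix.mulVec, dotProduct, hG, Matrix.of_apply]
    simp_rw [Finset.sum_mul, Finset.mul_sum]
    rw [Finset.sum_comm]
    exact Finset.sum_congr rfl fun _ _ => Finset.sum_congr rfl fun _ _ => by ring
  constructor
  · intro hdet
    rw [Fintype.linearIndependent_iff]
    intro v hv
    set g : n → ℝ := fun j => ∑ I, v I * f I j with hg
    have hgz : g = 0 := by
      funext j
      have := congrFun hv j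
      simpa [hg, Finset.sum_apply] using this
    have hGv0 : G *ᵥ v = 0 := by
      rw [hGv]; funext J
      have hfold : (fun j => ∑ I, v I * f I j) = g := rfl
      rw [hfold, hgz]
      simp
    by_contra hne
    push_neg at hne
    obtain ⟨i, hi⟩ := hne
    exact hdet (Matrix.exists_mulVec_eq_zero_iff.mp ⟨v, fun h => hi (congrFun h i), hGv0⟩)
  · intro hli hdet
    obtain ⟨v, hv0, hGv0⟩ := Matrix.exists_mulVec_eq_zero_iff.mpr hdet
    set g : n → ℝ := fun j => ∑ I, v I * f I j with hg
    have hvg : ∀ J, f J ⬝ᵥ g = 0 := by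
      intro J
      have := congrFun hGv0 J
      rw [hGv] at this
      exact this
    have hgg : g ⬝ᵥ g = 0 := by
      have : (∑ J, v J * (f J ⬝ᵥ g)) = g ⬝ᵥ g := by
        simp only [dotProduct, hg]
        simp_rw [Finset.mul_sum, Finset.sum_mul]
        rw [Finset.sum_comm]
        exact Finset.sum_congr rfl fun _ _ => Finset.sum_congr rfl fun _ _ =>
          Finset.sum_congr rfl fun _ _ => by ring
      rw [← this]
      simp [hvg]
    have hgz : g = 0 := by
      funext j
      have hnn : ∀ j ∈ Finset.univ, (0:ℝ) ≤ g j * g j := fun j _ => mul_self_nonneg _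
      have := (Finset.sum_eq_zero_iff_of_nonneg hnn).mp hgg j (Finset.mem_univ j)
      exact mul_self_eq_zero.mp this
    have := Fintype.linearIndependent_iff.mp hli v (by
      funext j
      simpa [Finset.sum_apply, ← hg] using congrFun hgz j)
    exact hv0 (funext this)

lemma exists_readout {κ n : Type*} [Fintype κ] [DecidableEq κ] [Fintype n] [DecidableEq n]
    (f : κ → n → ℝ) (hf : LinearIndependent ℝ f) (c : κ → ℝ) :
    ∃ v : n → ℝ, ∀ I, v ⬝ᵥ f I = c I := by
  classical
  set G : Matrix κ κ ℝ := Matrix.of fun I J : κ => f I ⬝ᵥ f J with hG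
  have hdet : G.det ≠ 0 := (gram_det_ne_zero_iff f).mpr hf
  set w : κ → ℝ := G⁻¹ *ᵥ c with hw
  refine ⟨fun j => ∑ J, w J * f J j, fun I => ?_⟩
  have h1 : (fun j => ∑ J, w J * f J j) ⬝ᵥ f I = (G *ᵥ w) I := by
    simp only [dotProduct, Matrix.mulVec, hG, Matrix.of_apply]
    simp only [Finset.sum_mul, Finset.mul_sum]
    rw [Finset.sum_comm]
    exact Finset.sum_congr rfl fun _ _ => Finset.sum_congr rfl fun _ _ => by ring
  rw [h1, hw, Matrix.mulVec_mulVec, Matrix.mul_nonsing_inv _ (isUnit_iff_ne_zero.mpr hdet), Matrix.one_mulVec]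

lemma mulVec_single_old {m n R : Type*} [Fintype n] [DecidableEq n] [NonUnitalNonAssocSemiring R]
    (M : Matrix m n R) (j : n) (x : R) : M *ᵥ Pi.single j x = fun i => M i j * x :=
  funext fun _ => dotProduct_single _ _ _

-- suffix closure
def sfxCl (d : ℕ) (𝒲 : Finset (List (Fin d))) : Finset (List (Fin d)) :=
  insert [] (𝒲.biUnion fun I => I.tails.toFinset)

lemma nil_mem_sfxCl (d : ℕ) (𝒲 : Finset (List (Fin d))) : [] ∈ sfxCl d 𝒲 :=
  Finset.mem_insert_self _ _

lemma mem_sfxCl_of_mem {d : ℕ} {𝒲 : Finset (List (Fin d))} {I : List (Fin d)} (h : I ∈ 𝒲) :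
    I ∈ sfxCl d 𝒲 :=
  Finset.mem_insert_of_mem (Finset.mem_biUnion.mpr ⟨I, h, by
    simp [List.mem_tails]⟩)

lemma sfxCl_closed {d : ℕ} {𝒲 : Finset (List (Fin d))} {i : Fin d} {J : List (Fin d)}
    (h : i :: J ∈ sfxCl d 𝒲) : J ∈ sfxCl d 𝒲 := by
  rcases Finset.mem_insert.mp h with h1 | h2
  · exact absurd h1 (by simp)
  · obtain ⟨I, hI, hmem⟩ := Finset.mem_biUnion.mp h2
    rw [List.mem_toFinset, List.mem_tails] at hmem
    exact Finset.mem_insert_of_mem (Finset.mem_biUnion.mpr ⟨I, hI, by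
      rw [List.mem_toFinset, List.mem_tails]
      exact (List.suffix_cons i J).trans hmem⟩)

lemma generic_wordProd_map {d : ℕ} {n : Type*} [Fintype n] [DecidableEq n]
    {R S : Type*} [CommRing R] [CommRing S]
    (f : R →+* S) (A : Fin d → Matrix n n R) (I : List (Fin d)) :
    ((I.map A).prod).map f = (I.map fun i => (A i).map f).prod := by
  induction I with
  | nil => simp [Matrix.map_one (⇑f) (map_zero f) (map_one f)]
  | cons i I ih => simp [Matrix.map_mul, ih]

lemma wordProd_blockDiagonal {d k b : ℕ} {R : Type*} [CommRing R]
    (D : Fin d → Fin k → Matrix (Fin b) (Fin b) R) (I : List (Fin d)) :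
    ((I.map fun i => Matrix.blockDiagonal (D i)).prod)
      = Matrix.blockDiagonal (fun l => (I.map fun i => D i l).prod) := by
  induction I with
  | nil => simp; exact (Matrix.blockDiagonal_one).symm
  | cons i I ih => simp [ih, Matrix.blockDiagonal_mul]

lemma exists_witness (d k b : ℕ) (hk : 1 ≤ k) (𝒲 : Finset (List (Fin d)))
    (hbT : (sfxCl d 𝒲).card ≤ b) :
    ∃ ω : BlockOmega d k b, ∃ p : {x // x ∈ 𝒲} → Fin b × Fin k, Function.Injective p ∧
      ∀ I : {x // x ∈ 𝒲}, blockFeature (I : List (Fin d)) ω = Pi.single (p I) 1 := by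
  classical
  set T := sfxCl d 𝒲 with hT
  have hcard : Fintype.card {x // x ∈ T} ≤ Fintype.card (Fin b) := by
    simpa [Fintype.card_coe] using hbT
  obtain ⟨φ⟩ := Function.Embedding.nonempty_of_card_le hcard
  set l₀ : Fin k := ⟨0, hk⟩ with hl₀
  set C : Fin d → Matrix (Fin b) (Fin b) ℝ := fun i =>
    ∑ J : {x // x ∈ T}, if h : (i :: (J : List (Fin d))) ∈ T then
      Matrix.single (φ ⟨i :: (J : List (Fin d)), h⟩) (φ J) (1:ℝ) else 0 with hC
  have key1 : ∀ (i : Fin d) (J : List (Fin d)) (hJ : J ∈ T) (hiJ : i :: J ∈ T),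
      C i *ᵥ Pi.single (φ ⟨J, hJ⟩) 1 = Pi.single (φ ⟨i :: J, hiJ⟩) 1 := by
    intro i J hJ hiJ
    rw [mulVec_single_old]
    funext α
    simp only [hC]
    rw [Matrix.sum_apply]
    rw [Finset.sum_eq_single (⟨J, hJ⟩ : {x // x ∈ T})]
    · rw [dif_pos hiJ]
      by_cases hα : α = φ ⟨i :: J, hiJ⟩
      · subst hα
        simp [Matrix.single_apply_same, Pi.single_apply]
      · rw [Pi.single_apply, if_neg (fun h => hα h)]
        rw [Matrix.single_apply_of_ne _ _ _ _ _ (fun hc => hα hc.1.symm), zero_mul]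
    · intro J' _ hne
      by_cases h' : (i :: (J' : List (Fin d))) ∈ T
      · rw [dif_pos h']
        exact Matrix.single_apply_of_ne _ _ _ _ _ (fun hc => hne (φ.injective hc.2))
      · rw [dif_neg h']; rfl
    · intro h; exact absurd (Finset.mem_univ _) h
  have key2 : ∀ (I : List (Fin d)) (hI : I ∈ T),
      ((I.map C).prod) *ᵥ Pi.single (φ ⟨[], nil_mem_sfxCl d 𝒲⟩) 1
        = Pi.single (φ ⟨I, hI⟩) 1 := by
    intro I
    induction I with
    | nil =>
      intro hI
      rw [List.map_nil, List.prod_nil, mulVec_single_old]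
      funext β
      rw [Matrix.one_apply, Pi.single_apply, mul_one]
    | cons i I ih =>
      intro hI
      rw [List.map_cons, List.prod_cons, ← Matrix.mulVec_mulVec]
      rw [ih (sfxCl_closed hI)]
      exact key1 i I (sfxCl_closed hI) hI
  refine ⟨⟨fun i _ α β => C i α β, Pi.single (φ ⟨[], nil_mem_sfxCl d 𝒲⟩, l₀) 1⟩,
    fun I => (φ ⟨(I : List (Fin d)), mem_sfxCl_of_mem I.2⟩, l₀), ?_, ?_⟩
  · intro I J h
    rw [Prod.ext_iff] at h
    have := φ.injective h.1
    exact Subtype.ext (by simpa using congrArg Subtype.val this)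
  · intro I
    have hblockA : ∀ i : Fin d, blockA (⟨fun i _ α β => C i α β,
        Pi.single (φ ⟨[], nil_mem_sfxCl d 𝒲⟩, l₀) 1⟩ : BlockOmega d k b) i
        = Matrix.blockDiagonal fun _ => C i := fun i => rfl
    rw [blockFeature, wordProd]
    rw [List.map_congr_left (fun i _ => hblockA i)]
    rw [wordProd_blockDiagonal (fun i _ => C i)]
    rw [mulVec_single_old]
    funext q
    obtain ⟨α, l⟩ := q
    rw [Matrix.blockDiagonal_apply]
    by_cases hl : l = l₀
    · subst hl
      rw [if_pos rfl, mul_one]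
      have := congrFun (key2 (I : List (Fin d)) (mem_sfxCl_of_mem I.2)) α
      rw [mulVec_single_old] at this
      simp only [mul_one] at this
      rw [this]
      rw [Pi.single_apply, Pi.single_apply]
      simp [Prod.ext_iff]
    · rw [if_neg hl, Pi.single_apply, if_neg (by simp [Prod.ext_iff, hl]), zero_mul]


abbrev PIdx (d k b : ℕ) := (Fin d × Fin k × Fin b × Fin b) ⊕ (Fin b × Fin k)

def polyA (d k b : ℕ) (i : Fin d) :
    Matrix (Fin b × Fin k) (Fin b × Fin k) (MvPolynomial (PIdx d k b) ℝ) :=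
  Matrix.blockDiagonal fun l => Matrix.of fun α β => MvPolynomial.X (Sum.inl (i, l, α, β))

def polyF (d k b : ℕ) (I : List (Fin d)) : (Fin b × Fin k) → MvPolynomial (PIdx d k b) ℝ :=
  ((I.map (polyA d k b)).prod).mulVec fun j => MvPolynomial.X (Sum.inr j)

def gramPoly (d k b : ℕ) (𝒲 : Finset (List (Fin d))) : MvPolynomial (PIdx d k b) ℝ :=
  (Matrix.of fun I J : {x // x ∈ 𝒲} => polyF d k b (I : List (Fin d)) ⬝ᵥ polyF d k b (J : List (Fin d))).det

def coordsFun (d k b : ℕ) (ω : BlockOmega d k b) : PIdx d k b → ℝ :=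
  Sum.elim (fun q => ω.1 q.1 q.2.1 q.2.2.1 q.2.2.2) ω.2

lemma coordsFun_measurable (d k b : ℕ) : Measurable (coordsFun d k b) := by
  refine measurable_pi_lambda _ fun i => ?_
  cases i with
  | inl q =>
    exact (measurable_pi_apply q.2.2.2).comp ((measurable_pi_apply q.2.2.1).comp
      ((measurable_pi_apply q.2.1).comp ((measurable_pi_apply q.1).comp measurable_fst)))
  | inr j => exact (measurable_pi_apply j).comp measurable_snd

lemma eval_polyA (d k b : ℕ) (ω : BlockOmega d k b) (i : Fin d) :
    (polyA d k b i).map (MvPolynomial.eval (coordsFun d k b ω)) = blockA ω i := by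
  ext ⟨α, l⟩ ⟨β, l'⟩
  simp only [polyA, blockA, Matrix.map_apply, Matrix.blockDiagonal_apply,
    apply_ite (MvPolynomial.eval (coordsFun d k b ω)), map_zero, Matrix.of_apply,
    MvPolynomial.eval_X]
  rfl

lemma eval_polyF (d k b : ℕ) (ω : BlockOmega d k b) (I : List (Fin d)) (j : Fin b × Fin k) :
    MvPolynomial.eval (coordsFun d k b ω) (polyF d k b I j) = blockFeature I ω j := by
  rw [polyF, blockFeature, wordProd]
  simp only [Matrix.mulVec, dotProduct]
  rw [map_sum]
  refine Finset.sum_congr rfl fun q _ => ?_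
  rw [_root_.map_mul]
  congr 1
  · have h1 := generic_wordProd_map (MvPolynomial.eval (coordsFun d k b ω)) (polyA d k b) I
    have h2 : (I.map fun i => (polyA d k b i).map (MvPolynomial.eval (coordsFun d k b ω)))
        = I.map (blockA ω) := List.map_congr_left fun i _ => eval_polyA d k b ω i
    rw [h2] at h1
    exact congrFun (congrFun h1 j) q
  · show MvPolynomial.eval (coordsFun d k b ω) (MvPolynomial.X (Sum.inr q)) = ω.2 q
    rw [MvPolynomial.eval_X]
    rfl

lemma eval_gramPoly (d k b : ℕ) (𝒲 : Finset (List (Fin d))) (ω : BlockOmega d k b) :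
    MvPolynomial.eval (coordsFun d k b ω) (gramPoly d k b 𝒲)
      = (Matrix.of fun I J : {x // x ∈ 𝒲} =>
          blockFeature (I : List (Fin d)) ω ⬝ᵥ blockFeature (J : List (Fin d)) ω).det := by
  classical
  rw [gramPoly, RingHom.map_det]
  congr 1
  ext I J
  simp only [RingHom.mapMatrix_apply, Matrix.map_apply, Matrix.of_apply]
  rw [dotProduct, dotProduct, map_sum]
  exact Finset.sum_congr rfl fun q _ => by rw [_root_.map_mul, eval_polyF, eval_polyF]

end Aux

/-- **High-probability linear independence and exact linear readout for the
block-diagonal model.**  For every `δ ∈ (0,1)` and every finite set `𝒲` of words over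
`{1,…,d}` there is a `b₀` such that for all block sizes `b ≥ b₀` and all numbers of
blocks `k ≥ 1` with `N = k⬝b ≥ |𝒲|`, with probability at least `1 - δ`: the family
`{A_I h₀ : I ∈ 𝒲} ⊂ ℝ^N` is linearly independent, and (equivalently) every assignment
of target values `c : 𝒲 → ℝ` admits a linear readout `v ∈ ℝ^N` with
`⟨v, A_I h₀⟩ = c(I)` for all `I ∈ 𝒲`. -/
theorem blockdiag_high_probability_linear_readout (d : ℕ) (hd : 1 ≤ d)
    (δ : ℝ) (hδ : δ ∈ Set.Ioo (0 : ℝ) 1) (𝒲 : Finset (List (Fin d))) :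
    ∃ b₀ : ℕ, ∀ b : ℕ, b₀ ≤ b → ∀ k : ℕ, 1 ≤ k → 𝒲.card ≤ k * b →
      blockMeasure d k b
          {ω | LinearIndependent ℝ (fun I : 𝒲 => blockFeature (I : List (Fin d)) ω)
            ∧ ∀ c : List (Fin d) → ℝ, ∃ v : Fin b × Fin k → ℝ,
                ∀ I ∈ 𝒲, v ⬝ᵥ blockFeature I ω = c I}
        ≥ ENNReal.ofReal (1 - δ) := by
  classical
  refine ⟨max 1 (sfxCl d 𝒲).card, fun b hb k hk _ => ?_⟩
  have hb1 : 1 ≤ b := le_trans (le_max_left _ _) hb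
  have hbT : (sfxCl d 𝒲).card ≤ b := le_trans (le_max_right _ _) hb
  obtain ⟨ω₀, p, hpinj, hfeat⟩ := exists_witness d k b hk 𝒲 hbT
  set P := gramPoly d k b 𝒲 with hPdef
  -- the Gram polynomial is non-zero thanks to the witness
  have hP : P ≠ 0 := by
    intro h0
    have h1 := eval_gramPoly d k b 𝒲 ω₀
    rw [← hPdef, h0, map_zero] at h1
    have hgram : (Matrix.of fun I J : {x // x ∈ 𝒲} =>
        blockFeature (I : List (Fin d)) ω₀ ⬝ᵥ blockFeature (J : List (Fin d)) ω₀)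
        = (1 : Matrix {x // x ∈ 𝒲} {x // x ∈ 𝒲} ℝ) := by
      ext I J
      rw [Matrix.of_apply, hfeat I, hfeat J, dotProduct_single, Pi.single_apply,
        Matrix.one_apply, mul_one]
      by_cases h : I = J
      · subst h; simp
      · rw [if_neg (fun hc => h (hpinj hc).symm), if_neg h]
    rw [hgram, Matrix.det_one] at h1
    exact one_ne_zero h1.symm
  -- the flat product measure and the measure-preserving parametrisation
  set μflat : PIdx d k b → Measure ℝ :=
    Sum.elim (fun _ : Fin d × Fin k × Fin b × Fin b => gaussianReal 0 (1 / b))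
      (fun _ : Fin b × Fin k => gaussianReal 0 1) with hμflat
  haveI hprobflat : ∀ i, IsProbabilityMeasure (μflat i) := by
    rintro (q | j)
    · exact inferInstanceAs (IsProbabilityMeasure (gaussianReal 0 (1 / b)))
    · exact inferInstanceAs (IsProbabilityMeasure (gaussianReal 0 1))
  have hatom : ∀ i x, μflat i {x} = 0 := by
    have hb0 : (b : NNReal) ≠ 0 := Nat.cast_ne_zero.mpr (Nat.one_le_iff_ne_zero.mp hb1)
    have hv : (1 / (b : NNReal)) ≠ 0 := one_div_ne_zero hb0
    rintro (q | j) x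
    · exact gaussianReal_absolutelyContinuous 0 hv (by simp)
    · exact gaussianReal_absolutelyContinuous 0 one_ne_zero (by simp)
  set Φ : (PIdx d k b → ℝ) → BlockOmega d k b :=
    (Prod.map (⇑(mcurry4 (Fin d) (Fin k) (Fin b) (Fin b))) id) ∘
      ⇑(MeasurableEquiv.sumPiEquivProdPi fun _ : PIdx d k b => ℝ) with hΦdef
  have hΦmp : MeasurePreserving Φ (Measure.pi μflat) (blockMeasure d k b) := by
    have h1 := measurePreserving_sumPiEquivProdPi (X := fun _ : PIdx d k b => ℝ) μflat
    have h2 := (measurePreserving_mcurry4 (α := Fin d) (β := Fin k) (γ := Fin b) (η := Fin b)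
        (gaussianReal 0 (1 / b))).prod
      (MeasurePreserving.id (Measure.pi fun _ : Fin b × Fin k => gaussianReal 0 1))
    exact h2.comp h1
  have hcoordsΦ : ∀ x, coordsFun d k b (Φ x) = x := by
    intro x
    funext i
    cases i <;> rfl
  -- the bad event is null
  set Z : Set (BlockOmega d k b) := {ω | MvPolynomial.eval (coordsFun d k b ω) P = 0} with hZdef
  have hZmeas : MeasurableSet Z :=
    ((measurable_mvpoly_eval P).comp (coordsFun_measurable d k b)) (measurableSet_singleton 0)
  have hZ0 : blockMeasure d k b Z = 0 := by
    rw [← hΦmp.measure_preimage hZmeas.nullMeasurableSet]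
    have hpre : Φ ⁻¹' Z = {x | MvPolynomial.eval x P = 0} := by
      ext x
      simp only [Set.mem_preimage, hZdef, Set.mem_setOf_eq, hcoordsΦ x]
    rw [hpre]
    exact mvpoly_null μflat hatom P hP
  -- off the bad event we have independence and readouts
  have hsub : Zᶜ ⊆ {ω : BlockOmega d k b |
      LinearIndependent ℝ (fun I : 𝒲 => blockFeature (I : List (Fin d)) ω)
      ∧ ∀ c : List (Fin d) → ℝ, ∃ v : Fin b × Fin k → ℝ,
          ∀ I ∈ 𝒲, v ⬝ᵥ blockFeature I ω = c I} := by
    intro ω hω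
    have hdet : (Matrix.of fun I J : {x // x ∈ 𝒲} =>
        blockFeature (I : List (Fin d)) ω ⬝ᵥ blockFeature (J : List (Fin d)) ω).det ≠ 0 := by
      rw [← eval_gramPoly d k b 𝒲 ω]
      exact hω
    have hli := (gram_det_ne_zero_iff _).mp hdet
    refine ⟨hli, fun c => ?_⟩
    obtain ⟨v, hv⟩ := exists_readout _ hli (fun I : {x // x ∈ 𝒲} => c (I : List (Fin d)))
    exact ⟨v, fun I hI => hv ⟨I, hI⟩⟩
  haveI : IsProbabilityMeasure (blockMeasure d k b) := by
    haveI h1 : IsProbabilityMeasure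
        (Measure.pi fun _ : Fin b => gaussianReal 0 (1 / (b : NNReal))) := inferInstance
    haveI h2 : IsProbabilityMeasure (Measure.pi fun _ : Fin k => Measure.pi fun _ : Fin b =>
        Measure.pi fun _ : Fin b => gaussianReal 0 (1 / (b : NNReal))) := inferInstance
    haveI h3 : IsProbabilityMeasure (Measure.pi fun _ : Fin d => Measure.pi fun _ : Fin k =>
        Measure.pi fun _ : Fin b => Measure.pi fun _ : Fin b =>
        gaussianReal 0 (1 / (b : NNReal))) := inferInstance
    haveI h4 : IsProbabilityMeasure
        (Measure.pi fun _ : Fin b × Fin k => gaussianReal 0 1) := inferInstance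
    unfold blockMeasure
    infer_instance
  refine le_trans ?_ (measure_mono hsub)
  rw [prob_compl_eq_one_sub hZmeas, hZ0, tsub_zero]
  exact ENNReal.ofReal_le_one.mpr (by linarith [hδ.1])

end
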